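/- arXiv:2210.13662 — 2 statements merged into one kernel-verified Lean document; each statement's English description precedes it below -/
import Mathlib

section
/- For the randomized response mechanism with uniform input distribution on M values, the mutual information equals I(X;Y) = log M - h(q - q/M) - (q - q/M)·log(M-1), where h is the binary entropy function. -/
/-! The rows and columns of the randomized-response channel sum to 1, so a uniform input yields
a uniform output and `I(X;Y) = log M - H(Y | X)`. Every row of the channel has one atom `1 - t` and
`M - 1` atoms `t / (M - 1)`, where `t = q - q / M`; its entropy is `h(t) + t log (M - 1)`. -/

open Real

/-- Transition kernel of the generalized randomized response mechanism. -/
noncomputable def rrChannel (M : ℕ) (q : ℝ) (x y : Fin M) : ℝ :=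
  if y = x then 1 - q + q / M else q / M

/-- Mutual information between the input `X ~ p` and the output of channel `Q`:
`I(X;Y) = Σ_{x,y} P(x,y) log(P(x,y)/(P(x)P(y)))`. -/
noncomputable def mutualInfo {α β : Type*} [Fintype α] [Fintype β]
    (p : α → ℝ) (Q : α → β → ℝ) : ℝ :=
  ∑ x, ∑ y, (p x * Q x y) *
    Real.log ((p x * Q x y) / (p x * (∑ x', p x' * Q x' y)))

open Finset

theorem mul_log_mul_left (c x : ℝ) (hc : c ≠ 0) : x * log (c * x) = x * log c + x * log x := by
  rcases eq_or_ne x 0 with rfl | hx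
  · simp
  · rw [log_mul hc hx, mul_add]

theorem mul_negMulLog (n s : ℝ) : n * negMulLog s = negMulLog (n * s) + n * s * log n := by
  rw [negMulLog_mul]
  unfold negMulLog
  ring

theorem Fintype.sum_apply_ite_eq {ι : Type*} [Fintype ι] [DecidableEq ι] (x : ι) (f : ℝ → ℝ)
    (a b : ℝ) : ∑ y, f (if y = x then a else b) = f a + (Fintype.card ι - 1) * f b := by
  have hoff : ∀ y ∈ ({x}ᶜ : Finset ι), f (if y = x then a else b) = f b := fun y hy => by
    rw [if_neg (notMem_singleton.mp (mem_compl.mp hy))]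
  rw [Fintype.sum_eq_add_sum_compl x, if_pos rfl, Finset.sum_congr rfl hoff, sum_const,
    card_compl, card_singleton, nsmul_eq_mul, Nat.cast_sub (Fintype.card_pos_iff.mpr ⟨x⟩),
    Nat.cast_one]

theorem mutualInfo_uniform_of_sum_eq_one {α β : Type*} [Fintype α] [Fintype β] [Nonempty α]
    (Q : α → β → ℝ) (hrow : ∀ x, ∑ y, Q x y = 1) (hcol : ∀ y, ∑ x, Q x y = 1) :
    mutualInfo (fun _ => 1 / (Fintype.card α : ℝ)) Q =
      log (Fintype.card α) - (∑ x, ∑ y, negMulLog (Q x y)) / Fintype.card α := by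
  set n : ℝ := (Fintype.card α : ℝ)
  have hn : n ≠ 0 := by positivity
  have hterm : ∀ x y, (1 / n * Q x y) * log ((1 / n * Q x y) / (1 / n * ∑ x', 1 / n * Q x' y))
      = (Q x y * log n - negMulLog (Q x y)) / n := by
    intro x y
    rw [← mul_sum, hcol, show 1 / n * Q x y / (1 / n * (1 / n * 1)) = n * Q x y by field_simp,
      mul_assoc, mul_log_mul_left n _ hn, negMulLog]
    ring
  simp only [mutualInfo, hterm, ← sum_div, sum_sub_distrib, ← sum_mul, hrow, sum_const,
    card_univ, nsmul_eq_mul]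
  field_simp
  ring

theorem rrChannel_comm (M : ℕ) (q : ℝ) (x y : Fin M) :
    rrChannel M q x y = rrChannel M q y x := by
  simp only [rrChannel, eq_comm]

theorem sum_rrChannel_right (M : ℕ) (q : ℝ) (x : Fin M) : ∑ y, rrChannel M q x y = 1 := by
  have hM : (M : ℝ) ≠ 0 := Nat.cast_ne_zero.mpr (Fin.pos x).ne'
  calc ∑ y, rrChannel M q x y = (1 - q + q / M) + (M - 1) * (q / M) := by
        simpa only [rrChannel, Fintype.card_fin, id_eq] using
          Fintype.sum_apply_ite_eq x id (1 - q + q / M) (q / M)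
    _ = 1 := by field_simp; ring

theorem sum_rrChannel_left (M : ℕ) (q : ℝ) (y : Fin M) : ∑ x, rrChannel M q x y = 1 := by
  simpa only [rrChannel_comm M q _ y] using sum_rrChannel_right M q y

theorem sum_negMulLog_rrChannel (M : ℕ) (q : ℝ) (x : Fin M) :
    ∑ y, negMulLog (rrChannel M q x y) =
      negMulLog (1 - q + q / M) + (M - 1) * negMulLog (q / M) := by
  simpa only [rrChannel, Fintype.card_fin] using
    Fintype.sum_apply_ite_eq x negMulLog (1 - q + q / M) (q / M)

theorem rr_mutualInfo_general (M : ℕ) (hM : 2 ≤ M) (q : ℝ) :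
    mutualInfo (fun _ : Fin M => 1 / M) (rrChannel M q) =
      Real.log M
        - (Real.negMulLog (q - q / M) + Real.negMulLog (1 - (q - q / M)))
        - (q - q / M) * Real.log (M - 1) := by
  have : NeZero M := ⟨by omega⟩
  have hM0 : (M : ℝ) ≠ 0 := NeZero.ne _
  have hI := mutualInfo_uniform_of_sum_eq_one (rrChannel M q) (sum_rrChannel_right M q)
    (sum_rrChannel_left M q)
  simp only [Fintype.card_fin] at hI
  rw [hI]
  simp only [sum_negMulLog_rrChannel, sum_const, card_univ, Fintype.card_fin, nsmul_eq_mul]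
  have ht : ((M : ℝ) - 1) * (q / M) = q - q / M := by field_simp
  rw [mul_negMulLog, ht, show 1 - q + q / M = 1 - (q - q / M) by ring]
  field_simp
  ring

/-- For randomized response with uniform input distribution on `M ≥ 2` values
and `0 < q < 1`, the mutual information equals
`I(X;Y) = log M - h(q - q/M) - (q - q/M) log(M-1)`,
where `h(t) = -t log t - (1-t) log(1-t)` is the binary entropy. -/
theorem rr_mutualInfo (M : ℕ) (hM : 2 ≤ M) (q : ℝ) (hq0 : 0 < q) (hq1 : q < 1) :
    mutualInfo (fun _ : Fin M => 1 / M) (rrChannel M q) =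
      Real.log M
        - (Real.negMulLog (q - q / M) + Real.negMulLog (1 - (q - q / M)))
        - (q - q / M) * Real.log (M - 1) :=
  rr_mutualInfo_general M hM q
end

section
/- Let Y be a mixture of M isotropic Gaussians on ℝ^d: Y has density Σ_m p_m φ(y; e_m, σ²I), with Δ = max_{m,l}‖e_m - e_l‖. Then I(X;Y) ≤ -Σ_m p_m · log(p_m + (1-p_m)·exp(-Δ²/(2σ²))), where X ~ Categorical(p) is the mixture index and Yated X=m is N(e_m, σ²I). -/
/-!
Write `f = ∑ₘ pₘ φₘ` for the mixture density and `Cₘₗ = ∫ φₘ log φₗ`. For each `m`, concavity of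
`log` with the weights `pₗ exp (Cₘₗ - Cₘₘ)` (normalised by their sum `Sₘ`) bounds `log f` from
below by `log Sₘ + Cₘₘ + Sₘ⁻¹ ∑ₗ pₗ exp (Cₘₗ - Cₘₘ) (log φₗ - Cₘₗ)`, and the last sum integrates to
zero against `φₘ`. Hence `∫ f log f ≥ ∑ₘ pₘ (Cₘₘ + log Sₘ)`: the pairwise-KL bound on the entropy
of a mixture. For isotropic Gaussians `Cₘₘ = -(d/2) log (2πeσ²)` and
`Cₘₗ - Cₘₘ = -‖eₘ - eₗ‖² / (2σ²) ≥ -Δ² / (2σ²)`, so `Sₘ ≥ pₘ + (1 - pₘ) exp (-Δ² / (2σ²))`.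
The Gaussian cross entropies are computed coordinatewise from the mean and variance of the
one-dimensional normal law.
-/

open Real MeasureTheory

/-- Density of the isotropic Gaussian `N(e, σ²I)` on `ℝ^d`. -/
noncomputable def gaussPDF (d : ℕ) (σ : ℝ) (e : EuclideanSpace ℝ (Fin d))
    (y : EuclideanSpace ℝ (Fin d)) : ℝ :=
  (2 * Real.pi * σ ^ 2) ^ (-(d : ℝ) / 2) * Real.exp (-‖y - e‖ ^ 2 / (2 * σ ^ 2))

open ProbabilityTheory
open scoped NNReal

lemma log_sum_add_inv_mul_sum_mul_log_le {ι : Type*} (s : Finset ι) {r z : ι → ℝ}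
    (hr : ∀ i ∈ s, 0 ≤ r i) (hS : 0 < ∑ i ∈ s, r i) (hz : ∀ i ∈ s, 0 < z i) :
    log (∑ i ∈ s, r i) + (∑ i ∈ s, r i)⁻¹ * ∑ i ∈ s, r i * log (z i) ≤
      log (∑ i ∈ s, r i * z i) := by
  set S := ∑ i ∈ s, r i
  have hw : ∀ i ∈ s, 0 ≤ S⁻¹ * r i := fun i hi => mul_nonneg (inv_nonneg.2 hS.le) (hr i hi)
  have hw1 : ∑ i ∈ s, S⁻¹ * r i = 1 := by rw [← Finset.mul_sum, inv_mul_cancel₀ hS.ne']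
  have hmean : 0 < ∑ i ∈ s, (S⁻¹ * r i) • z i := (convex_Ioi (0 : ℝ)).sum_mem hw hw1 hz
  have hjensen := strictConcaveOn_log_Ioi.concaveOn.le_map_sum hw hw1 hz
  simp only [smul_eq_mul, mul_assoc, ← Finset.mul_sum] at hjensen hmean
  have hrz : ∑ i ∈ s, r i * z i = S * (S⁻¹ * ∑ i ∈ s, r i * z i) := by
    rw [mul_inv_cancel_left₀ hS.ne']
  rw [hrz, log_mul hS.ne' hmean.ne']
  linarith

lemma sum_mul_pos_of_sum_eq_one {ι : Type*} [Fintype ι] {p a : ι → ℝ} (hp0 : ∀ i, 0 ≤ p i)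
    (hp1 : ∑ i, p i = 1) (ha : ∀ i, 0 < a i) : 0 < ∑ i, p i * a i := by
  obtain ⟨i, -, hi⟩ :=
    Finset.exists_lt_of_sum_lt (s := Finset.univ) (f := fun _ => (0 : ℝ)) (g := p) (by simp [hp1])
  exact Finset.sum_pos' (fun j _ => mul_nonneg (hp0 j) (ha j).le)
    ⟨i, Finset.mem_univ i, mul_pos hi (ha i)⟩

section MixtureWeights

variable {ι : Type*} [Fintype ι] {p a : ι → ℝ}

lemma mul_log_sum_mul_le (hp0 : ∀ i, 0 ≤ p i) (hp1 : ∑ i, p i = 1) (ha : ∀ i, 0 < a i) (m : ι) :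
    a m * log (∑ i, p i * a i) ≤ a m * log (a m) + (∑ i, p i * a i - a m) := by
  have hf := sum_mul_pos_of_sum_eq_one hp0 hp1 ha
  have h := log_le_sub_one_of_pos (div_pos hf (ha m))
  rw [log_div hf.ne' (ha m).ne'] at h
  have := mul_le_mul_of_nonneg_left h (ha m).le
  rw [mul_sub, mul_sub, mul_div_cancel₀ _ (ha m).ne'] at this
  linarith

lemma le_log_sum_mul (hp0 : ∀ i, 0 ≤ p i) (hp1 : ∑ i, p i = 1) (ha : ∀ i, 0 < a i)
    (C : ι → ℝ) (m : ι) :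
    log (∑ i, p i * exp (C i - C m)) + C m +
        (∑ i, p i * exp (C i - C m))⁻¹ * ∑ i, p i * exp (C i - C m) * (log (a i) - C i) ≤
      log (∑ i, p i * a i) := by
  set w := fun i => exp (C i - C m)
  have hS := sum_mul_pos_of_sum_eq_one hp0 hp1 fun i => exp_pos (C i - C m)
  have hjensen := log_sum_add_inv_mul_sum_mul_log_le Finset.univ (r := fun i => p i * w i)
    (z := fun i => a i / w i) (fun i _ => mul_nonneg (hp0 i) (exp_pos _).le) hS
    (fun i _ => div_pos (ha i) (exp_pos _))
  have hrz : ∀ i, p i * w i * (a i / w i) = p i * a i := fun i => by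
    rw [mul_assoc, mul_div_cancel₀ _ (exp_pos _).ne']
  have hlog : ∀ i, p i * w i * log (a i / w i) = p i * w i * (log (a i) - C i) + p i * w i * C m :=
    fun i => by rw [log_div (ha i).ne' (exp_pos _).ne', log_exp]; ring
  simp only [hrz, hlog, Finset.sum_add_distrib, ← Finset.sum_mul] at hjensen
  rw [mul_add, inv_mul_cancel_left₀ hS.ne'] at hjensen
  linarith

lemma add_one_sub_mul_exp_neg_le_sum [DecidableEq ι] (hp0 : ∀ i, 0 ≤ p i)
    (hp1 : ∑ i, p i = 1) {K : ι → ℝ} {B : ℝ} (m : ι) (hKm : K m = 0) (hK : ∀ i, K i ≤ B) :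
    p m + (1 - p m) * exp (-B) ≤ ∑ i, p i * exp (-K i) := by
  have hrest : 1 - p m = ∑ i ∈ Finset.univ.erase m, p i := by
    rw [← hp1, ← Finset.add_sum_erase _ _ (Finset.mem_univ m), add_sub_cancel_left]
  rw [← Finset.add_sum_erase _ _ (Finset.mem_univ m), hKm, neg_zero, exp_zero, mul_one, hrest,
    Finset.sum_mul]
  gcongr with i
  · exact hp0 i
  · exact hK i

lemma log_add_one_sub_mul_exp_neg_le (hp0 : ∀ i, 0 ≤ p i) (hp1 : ∑ i, p i = 1) {K : ι → ℝ}
    {B : ℝ} (m : ι) (hKm : K m = 0) (hK : ∀ i, K i ≤ B) :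
    log (p m + (1 - p m) * exp (-B)) ≤ log (∑ i, p i * exp (-K i)) := by
  classical
  have hpm : p m ≤ 1 := hp1 ▸ Finset.single_le_sum (fun i _ => hp0 i) (Finset.mem_univ m)
  have hexp : exp (-B) ≤ 1 := exp_le_one_iff.2 (by linarith [hK m])
  have hpos : 0 < p m + (1 - p m) * exp (-B) := by nlinarith [exp_pos (-B), hp0 m]
  exact log_le_log hpos (add_one_sub_mul_exp_neg_le_sum hp0 hp1 m hKm hK)

end MixtureWeights

section Mixture

variable {α ι : Type*} [MeasurableSpace α] {μ : Measure α} [Fintype ι] {p : ι → ℝ}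
  {φ : ι → α → ℝ}

lemma exists_integrable_minorant_mul_log_mixture (hp0 : ∀ i, 0 ≤ p i) (hp1 : ∑ i, p i = 1)
    (hφ : ∀ i x, 0 < φ i x) (hφ1 : ∀ i, ∫ x, φ i x ∂μ = 1)
    (hφlog : ∀ i j, Integrable (fun x => φ i x * log (φ j x)) μ) (m : ι) :
    ∃ L : α → ℝ, Integrable L μ ∧
      ∫ x, L x ∂μ = log (∑ l, p l * exp (∫ x, φ m x * log (φ l x) ∂μ -
          ∫ x, φ m x * log (φ m x) ∂μ)) + ∫ x, φ m x * log (φ m x) ∂μ ∧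
      ∀ x, L x ≤ φ m x * log (∑ i, p i * φ i x) := by
  set C := fun l => ∫ x, φ m x * log (φ l x) ∂μ
  set S := ∑ l, p l * exp (C l - C m)
  have hφint : Integrable (φ m) μ := Integrable.of_integral_ne_zero (by simp [hφ1])
  have hterm : ∀ l, Integrable (fun x => φ m x * log (φ l x) - C l * φ m x) μ :=
    fun l => (hφlog m l).sub (hφint.const_mul _)
  refine ⟨fun x => (log S + C m) * φ m x +
    S⁻¹ * ∑ l, p l * exp (C l - C m) * (φ m x * log (φ l x) - C l * φ m x), ?_, ?_, fun x => ?_⟩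
  · exact (hφint.const_mul _).add
      ((integrable_finsetSum _ fun l _ => (hterm l).const_mul _).const_mul _)
  · rw [integral_add (hφint.const_mul _)
      ((integrable_finsetSum _ fun l _ => (hterm l).const_mul _).const_mul _),
      integral_const_mul, integral_const_mul, integral_finsetSum _ fun l _ => (hterm l).const_mul _]
    simp [integral_const_mul, integral_sub (hφlog m _) (hφint.const_mul _), hφ1, C]
  · have h := mul_le_mul_of_nonneg_left
      (le_log_sum_mul hp0 hp1 (fun i => hφ i x) C m) (hφ m x).le
    refine le_trans (le_of_eq ?_) h
    have hsum : ∑ l, p l * exp (C l - C m) * (φ m x * log (φ l x) - C l * φ m x) =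
        φ m x * ∑ l, p l * exp (C l - C m) * (log (φ l x) - C l) := by
      rw [Finset.mul_sum]
      exact Finset.sum_congr rfl fun l _ => by ring
    change (log S + C m) * φ m x + S⁻¹ * _ = _
    rw [hsum]
    ring

lemma integrable_mul_log_mixture (hp0 : ∀ i, 0 ≤ p i) (hp1 : ∑ i, p i = 1)
    (hφ : ∀ i x, 0 < φ i x) (hφ1 : ∀ i, ∫ x, φ i x ∂μ = 1)
    (hφlog : ∀ i j, Integrable (fun x => φ i x * log (φ j x)) μ) (m : ι) :
    Integrable (fun x => φ m x * log (∑ i, p i * φ i x)) μ := by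
  obtain ⟨L, hL, -, hle⟩ :=
    exists_integrable_minorant_mul_log_mixture hp0 hp1 hφ hφ1 hφlog m
  have hφint : ∀ i, Integrable (φ i) μ := fun i =>
    Integrable.of_integral_ne_zero (by simp [hφ1])
  have hmeas : ∀ i, AEMeasurable (φ i) μ := fun i => (hφint i).aemeasurable
  refine integrable_of_le_of_le (by fun_prop) (ae_of_all _ hle)
    (ae_of_all _ fun x => mul_log_sum_mul_le hp0 hp1 (fun i => hφ i x) m) hL ?_
  exact (hφlog m m).add
    ((integrable_finsetSum _ fun i _ => (hφint i).const_mul (p i)).sub (hφint m))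

lemma integral_mul_log_mixture_ge (hp0 : ∀ i, 0 ≤ p i) (hp1 : ∑ i, p i = 1)
    (hφ : ∀ i x, 0 < φ i x) (hφ1 : ∀ i, ∫ x, φ i x ∂μ = 1)
    (hφlog : ∀ i j, Integrable (fun x => φ i x * log (φ j x)) μ) (m : ι) :
    log (∑ l, p l * exp (∫ x, φ m x * log (φ l x) ∂μ - ∫ x, φ m x * log (φ m x) ∂μ)) +
        ∫ x, φ m x * log (φ m x) ∂μ ≤
      ∫ x, φ m x * log (∑ i, p i * φ i x) ∂μ := by
  obtain ⟨L, hL, hLval, hle⟩ :=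
    exists_integrable_minorant_mul_log_mixture hp0 hp1 hφ hφ1 hφlog m
  rw [← hLval]
  exact integral_mono hL (integrable_mul_log_mixture hp0 hp1 hφ hφ1 hφlog m) hle

theorem integral_mixture_mul_log_ge (hp0 : ∀ i, 0 ≤ p i) (hp1 : ∑ i, p i = 1)
    (hφ : ∀ i x, 0 < φ i x) (hφ1 : ∀ i, ∫ x, φ i x ∂μ = 1)
    (hφlog : ∀ i j, Integrable (fun x => φ i x * log (φ j x)) μ) :
    ∑ m, p m * (log (∑ l, p l * exp (∫ x, φ m x * log (φ l x) ∂μ -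
        ∫ x, φ m x * log (φ m x) ∂μ)) + ∫ x, φ m x * log (φ m x) ∂μ) ≤
      ∫ x, (∑ i, p i * φ i x) * log (∑ i, p i * φ i x) ∂μ := by
  have hint := integrable_mul_log_mixture hp0 hp1 hφ hφ1 hφlog
  simp_rw [Finset.sum_mul, mul_assoc]
  rw [integral_finsetSum _ fun m _ => (hint m).const_mul (p m)]
  refine Finset.sum_le_sum fun m _ => ?_
  rw [integral_const_mul]
  exact mul_le_mul_of_nonneg_left (integral_mul_log_mixture_ge hp0 hp1 hφ hφ1 hφlog m) (hp0 m)

end Mixture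

lemma prod_mul_sum_eq_sum_prod_ite {ι R : Type*} [Fintype ι] [DecidableEq ι] [CommSemiring R]
    (a b : ι → R) :
    (∏ j, a j) * ∑ i, b i = ∑ i, ∏ j, a j * (if j = i then b j else 1) := by
  simp only [Finset.mul_sum, Finset.prod_mul_distrib, Finset.prod_ite_eq', Finset.mem_univ,
    if_true]

section ProdMulSum

variable {ι : Type*} [Fintype ι] [DecidableEq ι] {E : ι → Type*} [∀ i, MeasurableSpace (E i)]
  {μ : ∀ i, Measure (E i)} [∀ i, SigmaFinite (μ i)] {g h : ∀ i, E i → ℝ}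

lemma integrable_prod_ite_mul (hg : ∀ i, ∫ x, g i x ∂μ i = 1)
    (hgh : ∀ i, Integrable (fun x => g i x * h i x) (μ i)) (i : ι) :
    Integrable (fun x => ∏ j, g j (x j) * (if j = i then h j (x j) else 1)) (Measure.pi μ) := by
  refine Integrable.fintype_prod_dep (f := fun j t => g j t * if j = i then h j t else 1)
    fun j => ?_
  by_cases hj : j = i
  · subst hj; simpa using hgh j
  · simpa [hj] using Integrable.of_integral_ne_zero (by simp [hg j])

lemma integral_prod_ite_mul (hg : ∀ i, ∫ x, g i x ∂μ i = 1) (i : ι) :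
    ∫ x, ∏ j, g j (x j) * (if j = i then h j (x j) else 1) ∂Measure.pi μ =
      ∫ x, g i x * h i x ∂μ i := by
  rw [integral_fintype_prod_eq_prod (fun j t => g j t * if j = i then h j t else 1),
    Finset.prod_eq_single i (fun j _ hj => by simp [hj, hg j]) (by simp)]
  simp

lemma integrable_prod_mul_sum (hg : ∀ i, ∫ x, g i x ∂μ i = 1)
    (hgh : ∀ i, Integrable (fun x => g i x * h i x) (μ i)) :
    Integrable (fun x => (∏ j, g j (x j)) * ∑ i, h i (x i)) (Measure.pi μ) := by
  simp_rw [prod_mul_sum_eq_sum_prod_ite]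
  exact integrable_finsetSum _ fun i _ => integrable_prod_ite_mul hg hgh i

lemma integral_prod_mul_sum (hg : ∀ i, ∫ x, g i x ∂μ i = 1)
    (hgh : ∀ i, Integrable (fun x => g i x * h i x) (μ i)) :
    ∫ x, (∏ j, g j (x j)) * ∑ i, h i (x i) ∂Measure.pi μ = ∑ i, ∫ x, g i x * h i x ∂μ i := by
  simp_rw [prod_mul_sum_eq_sum_prod_ite]
  rw [integral_finsetSum _ fun i _ => integrable_prod_ite_mul hg hgh i]
  exact Finset.sum_congr rfl fun i _ => integral_prod_ite_mul hg i

end ProdMulSum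

lemma memLp_sub_const_gaussianReal (μ c : ℝ) (v : ℝ≥0) :
    MemLp (fun t : ℝ => t - c) 2 (gaussianReal μ v) :=
  (memLp_id_gaussianReal 2).sub (memLp_const c)

lemma integrable_gaussianPDFReal_mul_sq_sub (μ c : ℝ) {v : ℝ≥0} (hv : v ≠ 0) :
    Integrable (fun t => gaussianPDFReal μ v t * (t - c) ^ 2) := by
  have h := (memLp_sub_const_gaussianReal μ c v).integrable_sq
  rw [gaussianReal_of_var_ne_zero _ hv, gaussianPDF_def,
    integrable_withDensity_iff_integrable_smul' (by fun_prop) (by simp)] at h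
  refine h.congr (ae_of_all _ fun t => ?_)
  simp [ENNReal.toReal_ofReal (gaussianPDFReal_nonneg μ v t)]

lemma integral_gaussianPDFReal_mul_sq_sub (μ c : ℝ) {v : ℝ≥0} (hv : v ≠ 0) :
    ∫ t, gaussianPDFReal μ v t * (t - c) ^ 2 = v + (μ - c) ^ 2 := by
  have hmean : ∫ t, t - c ∂gaussianReal μ v = μ - c := by
    rw [integral_sub (f := fun t => t) ((memLp_id_gaussianReal 1).integrable le_rfl)
      (integrable_const c), integral_id_gaussianReal]
    simp
  have hvar := variance_eq_sub (memLp_sub_const_gaussianReal μ c v)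
  rw [variance_sub_const (by fun_prop), variance_fun_id_gaussianReal, hmean] at hvar
  simp_rw [← smul_eq_mul, ← integral_gaussianReal_eq_integral_smul hv]
  simp only [Pi.pow_apply] at hvar
  linarith

section Gaussian

variable {d : ℕ} {σ : ℝ}

lemma gaussPDF_toLp (e : EuclideanSpace ℝ (Fin d)) (x : Fin d → ℝ) :
    gaussPDF d σ e (WithLp.toLp 2 x) = ∏ i, gaussianPDFReal (e i) (‖σ‖₊ ^ 2) (x i) := by
  simp only [gaussPDF, gaussianPDFReal, NNReal.coe_pow, coe_nnnorm, norm_eq_abs, sq_abs,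
    Finset.prod_mul_distrib, ← exp_sum, EuclideanSpace.norm_sq_eq, Finset.prod_const,
    Finset.card_univ, Fintype.card_fin]
  congr 1
  · have h : 0 ≤ 2 * π * σ ^ 2 := by positivity
    rw [sqrt_eq_rpow, ← rpow_neg h, ← rpow_mul_natCast h]
    ring_nf
  · rw [neg_div, Finset.sum_div, ← Finset.sum_neg_distrib]
    simp [neg_div]

lemma norm_toLp_sub_sq (x : Fin d → ℝ) (c : EuclideanSpace ℝ (Fin d)) :
    ‖WithLp.toLp 2 x - c‖ ^ 2 = ∑ i, (x i - c i) ^ 2 := by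
  simp [EuclideanSpace.norm_sq_eq, sq_abs]

lemma integral_euclideanSpace_eq_integral_pi (F : EuclideanSpace ℝ (Fin d) → ℝ) :
    ∫ y, F y = ∫ x : Fin d → ℝ, F (WithLp.toLp 2 x) :=
  ((PiLp.volume_preserving_toLp (Fin d)).integral_comp
    (MeasurableEquiv.toLp 2 _).measurableEmbedding F).symm

lemma integrable_euclideanSpace_iff_integrable_pi {F : EuclideanSpace ℝ (Fin d) → ℝ} :
    Integrable F ↔ Integrable fun x : Fin d → ℝ => F (WithLp.toLp 2 x) :=
  ((PiLp.volume_preserving_toLp (Fin d)).integrable_comp_emb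
    (MeasurableEquiv.toLp 2 _).measurableEmbedding).symm

lemma nnnorm_sq_ne_zero (hσ : σ ≠ 0) : ‖σ‖₊ ^ 2 ≠ 0 := by
  simpa using hσ

lemma gaussPDF_pos (hσ : σ ≠ 0) (e y : EuclideanSpace ℝ (Fin d)) : 0 < gaussPDF d σ e y := by
  have : 0 < 2 * π * σ ^ 2 := by positivity
  unfold gaussPDF
  positivity

lemma integral_gaussPDF (hσ : σ ≠ 0) (e : EuclideanSpace ℝ (Fin d)) :
    ∫ y, gaussPDF d σ e y = 1 := by
  simp_rw [integral_euclideanSpace_eq_integral_pi, gaussPDF_toLp, volume_pi,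
    integral_fintype_prod_eq_prod (fun i => gaussianPDFReal (e i) (‖σ‖₊ ^ 2)),
    integral_gaussianPDFReal_eq_one _ (nnnorm_sq_ne_zero hσ), Finset.prod_const_one]

lemma integrable_gaussPDF (hσ : σ ≠ 0) (e : EuclideanSpace ℝ (Fin d)) :
    Integrable (gaussPDF d σ e) :=
  Integrable.of_integral_ne_zero (by simp [integral_gaussPDF hσ])

lemma integrable_gaussPDF_mul_norm_sub_sq (hσ : σ ≠ 0) (e c : EuclideanSpace ℝ (Fin d)) :
    Integrable fun y => gaussPDF d σ e y * ‖y - c‖ ^ 2 := by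
  simp_rw [integrable_euclideanSpace_iff_integrable_pi, gaussPDF_toLp, norm_toLp_sub_sq,
    volume_pi]
  exact integrable_prod_mul_sum
    (fun i => integral_gaussianPDFReal_eq_one _ (nnnorm_sq_ne_zero hσ))
    (fun i => integrable_gaussianPDFReal_mul_sq_sub _ _ (nnnorm_sq_ne_zero hσ))

lemma integral_gaussPDF_mul_norm_sub_sq (hσ : σ ≠ 0) (e c : EuclideanSpace ℝ (Fin d)) :
    ∫ y, gaussPDF d σ e y * ‖y - c‖ ^ 2 = d * σ ^ 2 + ‖e - c‖ ^ 2 := by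
  simp_rw [integral_euclideanSpace_eq_integral_pi, gaussPDF_toLp, norm_toLp_sub_sq, volume_pi]
  rw [integral_prod_mul_sum (fun i => integral_gaussianPDFReal_eq_one _ (nnnorm_sq_ne_zero hσ))
    (fun i => integrable_gaussianPDFReal_mul_sq_sub _ _ (nnnorm_sq_ne_zero hσ))]
  simp [integral_gaussianPDFReal_mul_sq_sub _ _ (nnnorm_sq_ne_zero hσ), Finset.sum_add_distrib,
    EuclideanSpace.norm_sq_eq, sq_abs]

lemma log_gaussPDF (hσ : σ ≠ 0) (e y : EuclideanSpace ℝ (Fin d)) :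
    log (gaussPDF d σ e y) = -(d / 2) * log (2 * π * σ ^ 2) - ‖y - e‖ ^ 2 / (2 * σ ^ 2) := by
  have : 0 < 2 * π * σ ^ 2 := by positivity
  rw [gaussPDF, log_mul (by positivity) (exp_pos _).ne', log_rpow this, log_exp]
  ring

lemma gaussPDF_mul_log_gaussPDF (hσ : σ ≠ 0) (e c y : EuclideanSpace ℝ (Fin d)) :
    gaussPDF d σ e y * log (gaussPDF d σ c y) =
      -(d / 2) * log (2 * π * σ ^ 2) * gaussPDF d σ e y -
        (2 * σ ^ 2)⁻¹ * (gaussPDF d σ e y * ‖y - c‖ ^ 2) := by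
  rw [log_gaussPDF hσ]
  ring

lemma integrable_gaussPDF_mul_log_gaussPDF (hσ : σ ≠ 0) (e c : EuclideanSpace ℝ (Fin d)) :
    Integrable fun y => gaussPDF d σ e y * log (gaussPDF d σ c y) := by
  simp_rw [gaussPDF_mul_log_gaussPDF hσ]
  exact ((integrable_gaussPDF hσ e).const_mul _).sub
    ((integrable_gaussPDF_mul_norm_sub_sq hσ e c).const_mul _)

lemma integral_gaussPDF_mul_log_gaussPDF (hσ : σ ≠ 0) (e c : EuclideanSpace ℝ (Fin d)) :
    ∫ y, gaussPDF d σ e y * log (gaussPDF d σ c y) =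
      -(d / 2) * log (2 * π * σ ^ 2) - (2 * σ ^ 2)⁻¹ * (d * σ ^ 2 + ‖e - c‖ ^ 2) := by
  simp_rw [gaussPDF_mul_log_gaussPDF hσ]
  rw [integral_sub ((integrable_gaussPDF hσ e).const_mul _)
      ((integrable_gaussPDF_mul_norm_sub_sq hσ e c).const_mul _),
    integral_const_mul, integral_const_mul, integral_gaussPDF hσ,
    integral_gaussPDF_mul_norm_sub_sq hσ]
  ring

lemma integral_gaussPDF_mul_log_gaussPDF_self (hσ : σ ≠ 0) (e : EuclideanSpace ℝ (Fin d)) :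
    ∫ y, gaussPDF d σ e y * log (gaussPDF d σ e y) = -(d / 2) * log (2 * π * exp 1 * σ ^ 2) := by
  have : 0 < 2 * π * σ ^ 2 := by positivity
  rw [integral_gaussPDF_mul_log_gaussPDF hσ, sub_self, norm_zero, mul_right_comm _ (exp 1),
    log_mul this.ne' (exp_pos 1).ne', log_exp]
  field_simp
  ring

lemma integral_gaussPDF_mul_log_gaussPDF_sub_self (hσ : σ ≠ 0) (e c : EuclideanSpace ℝ (Fin d)) :
    (∫ y, gaussPDF d σ e y * log (gaussPDF d σ c y)) -
        ∫ y, gaussPDF d σ e y * log (gaussPDF d σ e y) = -(‖e - c‖ ^ 2 / (2 * σ ^ 2)) := by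
  rw [integral_gaussPDF_mul_log_gaussPDF hσ, integral_gaussPDF_mul_log_gaussPDF hσ, sub_self,
    norm_zero]
  field_simp
  ring

end Gaussian

/-- Mutual information bound for the Gaussian mechanism. Let `Y` be a mixture
of `M` isotropic Gaussians `N(e_m, σ²I)` with weights `p`, let `X ~ p` be the
mixture index, and let `Δ` bound all pairwise distances `‖e_m - e_l‖`. Then
`I(X;Y) = h(Y) - h(Y|X)`, with `h(Y) = -∫ f log f` the differential entropy
of the mixture density `f` and `h(Y|X) = (d/2) log(2πeσ²)`, satisfies
`I(X;Y) ≤ -Σ_m p_m log(p_m + (1-p_m) exp(-Δ²/(2σ²)))`. -/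
theorem gaussian_mixture_mutualInfo_bound (d M : ℕ) (σ : ℝ) (hσ : 0 < σ)
    (p : Fin M → ℝ) (hp0 : ∀ m, 0 ≤ p m) (hp1 : ∑ m, p m = 1)
    (e : Fin M → EuclideanSpace ℝ (Fin d)) (Δ : ℝ)
    (hΔ : ∀ m l, ‖e m - e l‖ ≤ Δ) :
    (-∫ y, (∑ m, p m * gaussPDF d σ (e m) y) *
        Real.log (∑ m, p m * gaussPDF d σ (e m) y))
      - (d : ℝ) / 2 * Real.log (2 * Real.pi * Real.exp 1 * σ ^ 2) ≤
    -∑ m, p m * Real.log (p m + (1 - p m) * Real.exp (-Δ ^ 2 / (2 * σ ^ 2))) := by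
  have hσ0 := hσ.ne'
  have hmix := integral_mixture_mul_log_ge (μ := volume) hp0 hp1
    (fun m => gaussPDF_pos hσ0 (e m)) (fun m => integral_gaussPDF hσ0 (e m))
    (fun m l => integrable_gaussPDF_mul_log_gaussPDF hσ0 (e m) (e l))
  simp only [integral_gaussPDF_mul_log_gaussPDF_sub_self hσ0] at hmix
  simp only [integral_gaussPDF_mul_log_gaussPDF_self hσ0, mul_add, Finset.sum_add_distrib,
    ← Finset.sum_mul, hp1, one_mul] at hmix
  have hweights : ∀ m, p m * log (p m + (1 - p m) * exp (-(Δ ^ 2 / (2 * σ ^ 2)))) ≤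
      p m * log (∑ l, p l * exp (-(‖e m - e l‖ ^ 2 / (2 * σ ^ 2)))) := fun m =>
    mul_le_mul_of_nonneg_left (log_add_one_sub_mul_exp_neg_le hp0 hp1 m (by simp)
      fun l => by gcongr; exact hΔ m l) (hp0 m)
  rw [neg_div]
  linarith [Finset.sum_le_sum fun m (_ : m ∈ Finset.univ) => hweights m]
end
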